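/- arXiv:2108.12417 — 2 statements merged into one kernel-verified Lean document; each statement's English description precedes it below -/
import Mathlib

section
/- Let a ≥ 1, 0 ≤ s < a, and let r be a positive integer whose reduced NAF has bitlength a - s. Then deg(B_{2^a - r}) = s + deg(B_r). -/
open Polynomial in
/-- The Stern polynomial: `B 0 = 0`, `B 1 = 1`, `B (2n) = t * B n`, `B (2n+1) = B n + B (n+1)`. -/
noncomputable def sternP : ℕ → Polynomial ℕ
  | 0 => 0
  | 1 => 1
  | n + 2 =>
    if (n + 2) % 2 = 0 then X * sternP (n / 2 + 1)
    else sternP (n / 2 + 1) + sternP (n / 2 + 2)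
decreasing_by all_goals omega

/-- The digits of a BSD representation lie in {-1, 0, 1}. -/
def IsBSDDigits {i : ℕ} (b : Fin i → ℤ) : Prop := ∀ j, b j ∈ ({-1, 0, 1} : Set ℤ)

/-- The value represented by the digit string `b` (least significant digit `b 0`). -/
def bsdVal {i : ℕ} (b : Fin i → ℤ) : ℤ := ∑ j : Fin i, b j * 2 ^ (j : ℕ)

/-- `b` is a (not necessarily reduced) non-adjacent form digit string of length `k`:
digits in {-1,0,1}, no two adjacent digits both nonzero, and nonzero leading digit
(when `k > 0`). -/
def IsReducedNAF {k : ℕ} (b : Fin k → ℤ) : Prop :=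
  IsBSDDigits b ∧
  (∀ j : Fin k, ∀ h : (j : ℕ) + 1 < k, b j = 0 ∨ b ⟨(j : ℕ) + 1, h⟩ = 0) ∧
  (∀ h : 0 < k, b ⟨k - 1, Nat.sub_lt h one_pos⟩ ≠ 0)

/-- `m` has a reduced NAF representation of bitlength `k`. -/
def HasNAFLen (m : ℤ) (k : ℕ) : Prop :=
  ∃ b : Fin k → ℤ, IsReducedNAF b ∧ bsdVal b = m

/-- `I k`: the set of positive integers of NAF-bitlength `k`. -/
def NAFInterval (k : ℕ) : Set ℕ := {n : ℕ | HasNAFLen (n : ℤ) k}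

/-- `a k = min I k`: `a 1 = 1`, `a 2 = 2`, `a k = 2^(k-2) + a (k-2)`. -/
def aseq : ℕ → ℕ
  | 0 => 0
  | 1 => 1
  | 2 => 2
  | k + 3 => 2 ^ (k + 1) + aseq (k + 1)

/-- The NAF-bitlength of `n`. -/
noncomputable def nafLen (n : ℕ) : ℕ := sInf {k : ℕ | HasNAFLen (n : ℤ) k}

/-- The minimal Hamming weight of a BSD representation of `n` of length
equal to its NAF-bitlength. -/
noncomputable def minWeight (n : ℕ) : ℕ :=
  sInf {w : ℕ | ∃ b : Fin (nafLen n) → ℤ,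
    IsBSDDigits b ∧ bsdVal b = (n : ℤ) ∧ {j | b j ≠ 0}.ncard = w}

/-- `Z n`: the number of zeros in an optimal (minimal-weight) BSD representation of `n`
of length equal to its NAF-bitlength. -/
noncomputable def Zfun (n : ℕ) : ℕ := nafLen n - minWeight n

/-- `M n`: the number of optimal (minimal-weight) BSD representations of `n`
of length equal to its NAF-bitlength. -/
noncomputable def Mfun (n : ℕ) : ℕ :=
  {b : Fin (nafLen n) → ℤ |
    IsBSDDigits b ∧ bsdVal b = (n : ℤ) ∧ {j | b j ≠ 0}.ncard = minWeight n}.ncard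


/-!
Write `d n` for the degree of the Stern polynomial `B n`, so that `d (2n) = d n + 1` and
`d (2n+1) = max (d n) (d (n+1))` (no cancellation can occur in `ℕ[X]`). A reduced NAF of length
`k` has value `r` with `2^k < 3r < 2^(k+1)`, and the theorem is proved for every `r` in this band
by strong induction on `r`. For `r = 2r'` both sides shift by one. For `r = 2q+1` both sides
split into a maximum over `q` and `q+1`, which lie in the band of `k-1` except at the two edges
`3q+1 = 2^(k-1)` and `3(q+1) = 2^k+1`; there the inductive hypothesis is applied with `s ± 1`,
and the identity `d (q+1) = d q + 1` for `q = (4^i-1)/3` makes the two maxima agree again.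
-/

open Polynomial Finset

section NonAdjacentForm

variable {c : ℕ → ℤ}

theorem three_mul_abs_sum_digits_lt (hc : ∀ j, |c j| ≤ 1)
    (hadj : ∀ j, c j = 0 ∨ c (j + 1) = 0) (k : ℕ) :
    3 * |∑ j ∈ range k, c j * 2 ^ j| < 2 ^ (k + 1) := by
  induction k using Nat.strong_induction_on with
  | _ k ih =>
    have hterm (j : ℕ) : |c j * 2 ^ j| ≤ 2 ^ j := by
      rw [abs_mul, abs_pow, abs_two]
      exact mul_le_of_le_one_left (by positivity) (hc j)
    obtain _ | _ | k := k
    · simp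
    · norm_num
      linarith [hc 0]
    rw [sum_range_succ, sum_range_succ]
    rcases hadj k with h | h
    · have := abs_add_le (∑ j ∈ range k, c j * 2 ^ j) (c (k + 1) * 2 ^ (k + 1))
      rw [h, zero_mul, add_zero]
      linarith [ih k (by omega), hterm (k + 1), pow_succ (2 : ℤ) (k + 1),
        pow_succ (2 : ℤ) (k + 1 + 1)]
    · rw [h, zero_mul, add_zero, ← sum_range_succ]
      linarith [ih (k + 1) (by omega), pow_succ (2 : ℤ) (k + 1 + 1),
        pow_pos (two_pos (α := ℤ)) (k + 1 + 1)]

theorem lt_three_mul_abs_sum_digits (hc : ∀ j, |c j| ≤ 1)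
    (hadj : ∀ j, c j = 0 ∨ c (j + 1) = 0) {k : ℕ} (hk : c k ≠ 0) :
    2 ^ (k + 1) < 3 * |∑ j ∈ range (k + 1), c j * 2 ^ j| := by
  have hlead : |c k * 2 ^ k| = 2 ^ k := by
    rw [abs_mul, abs_pow, abs_two, le_antisymm (hc k) (Int.one_le_abs hk), one_mul]
  have hlow : 3 * |∑ j ∈ range k, c j * 2 ^ j| < 2 ^ k := by
    obtain _ | k := k
    · simp
    rw [sum_range_succ, (hadj k).resolve_right hk, zero_mul, add_zero]
    exact three_mul_abs_sum_digits_lt hc hadj k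
  have := abs_sub_abs_le_abs_add (c k * 2 ^ k) (∑ j ∈ range k, c j * 2 ^ j)
  rw [add_comm] at this
  rw [sum_range_succ]
  linarith [pow_succ (2 : ℤ) k]

end NonAdjacentForm

theorem HasNAFLen.exists_digits {m : ℤ} {k : ℕ} (h : HasNAFLen m k) :
    ∃ c : ℕ → ℤ, (∀ j, |c j| ≤ 1) ∧ (∀ j, c j = 0 ∨ c (j + 1) = 0) ∧
      (k ≠ 0 → c (k - 1) ≠ 0) ∧ m = ∑ j ∈ range k, c j * 2 ^ j := by
  obtain ⟨b, ⟨hdig, hadj, hlead⟩, rfl⟩ := h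
  refine ⟨fun j ↦ if hj : j < k then b ⟨j, hj⟩ else 0,
    fun j ↦ ?_, fun j ↦ ?_, fun hk ↦ ?_, ?_⟩
  · by_cases hj : j < k
    · have := hdig ⟨j, hj⟩
      simp only [Set.mem_insert_iff, Set.mem_singleton_iff] at this
      rcases this with h | h | h <;> simp [hj, h]
    · simp [hj]
  · by_cases hj : j + 1 < k
    · simpa [hj, show j < k by omega] using hadj ⟨j, by omega⟩ hj
    · simp [hj]
  · simpa [show k - 1 < k by omega] using hlead (by omega)
  · rw [bsdVal, ← Fin.sum_univ_eq_sum_range]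
    simp

theorem HasNAFLen.three_mul_abs_mem_Ioo {m : ℤ} {k : ℕ} (h : HasNAFLen m k) (hk : k ≠ 0) :
    3 * |m| ∈ Set.Ioo (2 ^ k) (2 ^ (k + 1)) := by
  obtain ⟨c, hc, hadj, hlead, rfl⟩ := h.exists_digits
  obtain ⟨k, rfl⟩ := Nat.exists_eq_succ_of_ne_zero hk
  exact ⟨lt_three_mul_abs_sum_digits hc hadj (hlead hk), three_mul_abs_sum_digits_lt hc hadj _⟩

theorem three_mul_ne_two_pow (m n : ℕ) : 3 * m ≠ 2 ^ n := fun h ↦ by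
  have := Nat.prime_three.dvd_of_dvd_pow (Dvd.intro m h)
  omega

theorem Polynomial.natDegree_add_eq_max {R : Type*} [Semiring R] [PartialOrder R]
    [CanonicallyOrderedAdd R] {p q : R[X]} (hp : p ≠ 0) (hq : q ≠ 0) :
    (p + q).natDegree = max p.natDegree q.natDegree := by
  have hlc : p.leadingCoeff + q.leadingCoeff ≠ 0 := by
    simp [add_eq_zero, hp]
  apply natDegree_eq_of_degree_eq_some
  rw [degree_add_eq_of_leadingCoeff_add_ne_zero hlc, degree_eq_natDegree hp,
    degree_eq_natDegree hq]
  rfl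

theorem sternP_two_mul (n : ℕ) : sternP (2 * n) = X * sternP n := by
  rcases n with _ | n
  · simp [sternP]
  · rw [show 2 * (n + 1) = 2 * n + 2 by ring, sternP, if_pos (by omega)]
    congr 2
    omega

theorem sternP_two_mul_add_one (n : ℕ) : sternP (2 * n + 1) = sternP n + sternP (n + 1) := by
  rcases n with _ | n
  · simp [sternP]
  · rw [show 2 * (n + 1) + 1 = 2 * n + 1 + 2 by ring, sternP, if_neg (by omega)]
    congr 2 <;> omega

theorem sternP_eval_one_pos {n : ℕ} (hn : n ≠ 0) : 0 < (sternP n).eval 1 := by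
  induction n using Nat.strong_induction_on with
  | _ n ih =>
    obtain ⟨m, rfl | rfl⟩ := Nat.even_or_odd' n
    · rw [sternP_two_mul, eval_mul, eval_X, one_mul]
      exact ih m (by omega) (by omega)
    · rcases m with _ | m
      · simp [sternP]
      rw [sternP_two_mul_add_one, eval_add]
      exact Nat.add_pos_right _ (ih (m + 2) (by omega) (by omega))

theorem sternP_ne_zero {n : ℕ} (hn : n ≠ 0) : sternP n ≠ 0 := fun h ↦ by
  simpa [h] using sternP_eval_one_pos hn

theorem natDegree_sternP_two_mul {n : ℕ} (hn : n ≠ 0) :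
    (sternP (2 * n)).natDegree = (sternP n).natDegree + 1 := by
  rw [sternP_two_mul, natDegree_X_mul (sternP_ne_zero hn)]

theorem natDegree_sternP_two_mul_add_one (n : ℕ) :
    (sternP (2 * n + 1)).natDegree = max (sternP n).natDegree (sternP (n + 1)).natDegree := by
  obtain rfl | hn := eq_or_ne n 0
  · simp [sternP]
  rw [sternP_two_mul_add_one, natDegree_add_eq_max (sternP_ne_zero hn) (sternP_ne_zero (by omega))]

theorem natDegree_sternP_two_pow (n : ℕ) : (sternP (2 ^ n)).natDegree = n := by
  induction n with
  | zero => simp [sternP]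
  | succ n ih => rw [pow_succ', natDegree_sternP_two_mul (by positivity), ih]

theorem natDegree_sternP_two_pow_succ_sub_two_mul {n r : ℕ} (hr : r < 2 ^ n) :
    (sternP (2 ^ (n + 1) - 2 * r)).natDegree = (sternP (2 ^ n - r)).natDegree + 1 := by
  rw [pow_succ, show 2 ^ n * 2 - 2 * r = 2 * (2 ^ n - r) by omega,
    natDegree_sternP_two_mul (by omega)]

theorem natDegree_sternP_two_pow_succ_sub_two_mul_add_one {n q : ℕ} (hq : q < 2 ^ n) :
    (sternP (2 ^ (n + 1) - (2 * q + 1))).natDegree =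
      max (sternP (2 ^ n - (q + 1))).natDegree (sternP (2 ^ n - q)).natDegree := by
  rw [pow_succ, show 2 ^ n * 2 - (2 * q + 1) = 2 * (2 ^ n - (q + 1)) + 1 by omega,
    natDegree_sternP_two_mul_add_one, show 2 ^ n - (q + 1) + 1 = 2 ^ n - q by omega]

theorem natDegree_sternP_two_pow_succ_sub_one (n : ℕ) :
    (sternP (2 ^ (n + 1) - 1)).natDegree = n := by
  induction n with
  | zero => simp [sternP]
  | succ n ih =>
    have := natDegree_sternP_two_pow_succ_sub_two_mul_add_one (n := n + 1) (q := 0) (by positivity)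
    rw [mul_zero, zero_add, tsub_zero, ih, natDegree_sternP_two_pow] at this
    omega

theorem natDegree_sternP_succ_of_three_mul_add_one_eq_two_pow {q n : ℕ} (hq : q ≠ 0)
    (h : 3 * q + 1 = 2 ^ n) : (sternP (q + 1)).natDegree = (sternP q).natDegree + 1 := by
  induction q using Nat.strong_induction_on generalizing n with
  | _ q ih =>
    obtain _ | _ | n := n
    · omega
    · omega
    rw [pow_succ, pow_succ] at h
    obtain rfl | hq1 := eq_or_ne q 1
    · simp [sternP]
    obtain ⟨m, rfl⟩ : ∃ m, q = 4 * m + 1 := ⟨q / 4, by omega⟩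
    have hm : m ≠ 0 := by omega
    rw [show 4 * m + 1 + 1 = 2 * (2 * m + 1) by ring, show 4 * m + 1 = 2 * (2 * m) + 1 by ring,
      natDegree_sternP_two_mul (by omega), natDegree_sternP_two_mul_add_one (2 * m),
      natDegree_sternP_two_mul_add_one m, natDegree_sternP_two_mul hm,
      ih m (by omega) hm (n := n) (by omega)]
    omega

theorem natDegree_sternP_two_mul_add_one_of_three_mul_add_one_eq_two_pow {m n : ℕ} (hm : m ≠ 0)
    (h : 3 * m + 1 = 2 ^ n) : (sternP (2 * m + 1)).natDegree = (sternP m).natDegree + 1 := by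
  rw [natDegree_sternP_two_mul_add_one, natDegree_sternP_succ_of_three_mul_add_one_eq_two_pow hm h]
  omega

def SternDegShift (r : ℕ) : Prop :=
  ∀ k s : ℕ, 2 ^ k < 3 * r → 3 * r < 2 ^ (k + 1) →
    (sternP (2 ^ (k + s) - r)).natDegree = s + (sternP r).natDegree

theorem sternDegShift_one : SternDegShift 1 := by
  intro k s hlo hhi
  obtain _ | _ | k := k
  · norm_num at hhi
  · rw [add_comm, natDegree_sternP_two_pow_succ_sub_one]
    simp [sternP]
  · rw [pow_add] at hlo
    have := Nat.one_le_two_pow (n := k)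
    omega

theorem SternDegShift.two_mul {r : ℕ} (hr : r ≠ 0) (h : SternDegShift r) :
    SternDegShift (2 * r) := by
  intro k s hlo hhi
  obtain _ | k := k
  · omega
  rw [pow_succ] at hlo hhi
  have hle : 2 ^ k ≤ 2 ^ (k + s) := Nat.pow_le_pow_right (by norm_num) (by omega)
  rw [add_right_comm, natDegree_sternP_two_pow_succ_sub_two_mul (by omega),
    h k s (by omega) (by omega), natDegree_sternP_two_mul hr]
  ring

theorem three_mul_halves_mem_band {q j : ℕ} (hlo : 2 ^ (j + 2) < 3 * (2 * q + 1))
    (hhi : 3 * (2 * q + 1) < 2 ^ (j + 3)) :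
    (2 ^ (j + 1) < 3 * q ∨ 3 * q + 1 = 2 ^ (j + 1)) ∧
      (3 * (q + 1) < 2 ^ (j + 2) ∨ 3 * (q + 1) = 2 ^ (j + 2) + 1) := by
  have := three_mul_ne_two_pow q (j + 1)
  have := three_mul_ne_two_pow (q + 1) (j + 2)
  simp only [pow_succ] at *
  omega

theorem SternDegShift.two_mul_add_one {q : ℕ} (hq : q ≠ 0) (h₀ : SternDegShift q)
    (h₁ : SternDegShift (q + 1)) : SternDegShift (2 * q + 1) := by
  intro k s hlo hhi
  obtain _ | _ | j := k
  · omega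
  · omega
  have hj : j ≠ 0 := by rintro rfl; omega
  obtain ⟨hq_band, hq1_band⟩ := three_mul_halves_mem_band hlo hhi
  have hP : 2 ≤ 2 ^ j := Nat.le_self_pow hj 2
  have hP1 : 2 ^ (j + 1) = 2 * 2 ^ j := by ring
  have hP2 : 2 ^ (j + 2) = 4 * 2 ^ j := by ring
  set A := 2 ^ (j + 1 + s) with hA
  have hAP : 2 ^ (j + 1) ≤ A := Nat.pow_le_pow_right (by norm_num) (by omega)
  rw [show j + 1 + 1 + s = j + 1 + s + 1 by ring, natDegree_sternP_two_pow_succ_sub_two_mul_add_one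
    (by omega), ← hA, natDegree_sternP_two_mul_add_one q]
  rcases hq_band with hq_in | hq_edge <;> rcases hq1_band with hq1_in | hq1_edge
  · rw [h₀ (j + 1) s hq_in (by omega), h₁ (j + 1) s (by omega) hq1_in]
    omega
  · obtain ⟨m, rfl⟩ : ∃ m, q = 2 * m := ⟨q / 2, by omega⟩
    have hm : m ≠ 0 := by omega
    have hm_edge : 3 * m + 1 = 2 ^ (j + 1) := by omega
    have hdeg := natDegree_sternP_two_mul_add_one_of_three_mul_add_one_eq_two_pow hm hm_edge
    rw [natDegree_sternP_two_mul hm, hdeg]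
    obtain _ | s := s
    · rw [add_zero] at hA
      rw [show A - (2 * m + 1) = m by omega, show A - 2 * m = m + 1 by omega,
        natDegree_sternP_succ_of_three_mul_add_one_eq_two_pow hm hm_edge]
      omega
    have := h₁ (j + 2) s (by omega) (by rw [pow_succ]; omega)
    rw [show j + 2 + s = j + 1 + (s + 1) by ring, ← hA, hdeg] at this
    rw [this, h₀ (j + 1) (s + 1) hq_in (by omega), natDegree_sternP_two_mul hm]
    omega
  · have := h₀ j (s + 1) (by omega) (by omega)
    rw [show j + (s + 1) = j + 1 + s by ring, ← hA] at this
    rw [this, h₁ (j + 1) s (by omega) hq1_in,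
      natDegree_sternP_succ_of_three_mul_add_one_eq_two_pow hq hq_edge]
    omega
  · omega

theorem sternDegShift (r : ℕ) : SternDegShift r := by
  induction r using Nat.strong_induction_on with
  | _ r ih =>
    obtain rfl | hr := eq_or_ne r 0
    · intro k s hlo
      omega
    obtain ⟨q, rfl | rfl⟩ := Nat.even_or_odd' r
    · exact (ih q (by omega)).two_mul (by omega)
    obtain rfl | hq := eq_or_ne q 0
    · exact sternDegShift_one
    exact (ih q (by omega)).two_mul_add_one hq (ih (q + 1) (by omega))

theorem stern_deg_compare_general (a s r : ℕ) (hs : s < a) (h : HasNAFLen (r : ℤ) (a - s)) :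
    (sternP (2 ^ a - r)).natDegree = s + (sternP r).natDegree := by
  obtain ⟨hlo, hhi⟩ := h.three_mul_abs_mem_Ioo (by omega)
  rw [Int.abs_natCast] at hlo hhi
  have := sternDegShift r (a - s) s (by exact_mod_cast hlo) (by exact_mod_cast hhi)
  rwa [Nat.sub_add_cancel hs.le] at this

theorem stern_deg_compare (a s r : ℕ) (ha : 1 ≤ a) (hs : s < a) (hr : 0 < r)
    (h : HasNAFLen (r : ℤ) (a - s)) :
    (sternP (2 ^ a - r)).natDegree = s + (sternP r).natDegree :=
  stern_deg_compare_general a s r hs h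
end

section
/- Let k ≥ 3 and let M(n) denote the number of optimal (minimal-weight) k-bit BSD representations of n ∈ I_k. For 0 ≤ v < |I_{k-2}|: M(a_k + v) = M(2^{k-2} - (a_{k-2} + v)) + M(a_{k-2} + v) and M(c_k + v) = M(a_{k-2} + v), where a_k = min I_k and c_k = 2^{k-1} + a_{k-2}. -/
/-!
Let `w n` and `ℓ n` be the weight and the length of the NAF of `n`, computed by the usual
digit-by-digit recursion (`nafWeight`, `nafLength`); `ℓ n = j` exactly on `I_j = [a_j, a_{j+1})`.
All length-`L` representations of `m` are recorded in a weight enumerator `bsdPoly L m ∈ ℕ[X]`, so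
that `M n` is the coefficient of `X ^ w n` in `bsdPoly (ℓ n) n`. The NAF is optimal, i.e.
`X ^ w |m|` divides `bsdPoly L m`, and splitting off the top digit gives
`bsdPoly (L + 1) m = bsdPoly L m + X * (bsdPoly L (m - 2 ^ L) + bsdPoly L (m + 2 ^ L))`,
where a term vanishes as soon as its value is out of range.

For `n ∈ I_j` the numbers `2 ^ j + n` and `2 ^ (j + 1) + n` lie in `I_{j+2}` and have NAF weight
`w n + 1`, while `2 ^ j - n ∈ I_j` has NAF weight `w n`. Splitting the top digit of
`2 ^ (j + 1) + n` leaves only `X * bsdPoly (j + 1) n`, and splitting `2 ^ j + n` twice leaves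
`X * bsdPoly j n + X * bsdPoly (j + 1) (-(2 ^ j - n))`. Finally, an extra leading position adds
no optimal representation of `n ∈ I_j`: a leading `1` there leaves a representation of
`-(2 ^ j - n)` of weight `w n - 1`, below its NAF weight.
-/

open Polynomial

/- One NAF step: the lowest digit of `n` is `±(n % 2)`, negative exactly when `n % 4 = 3`, which is
when `n % 4 / 3 = 1`; the remaining digits represent `n / 2 + n % 4 / 3`. -/
def nafLength : ℕ → ℕ
  | 0 => 0
  | n + 1 => nafLength ((n + 1) / 2 + (n + 1) % 4 / 3) + 1
decreasing_by omega

def nafWeight : ℕ → ℕ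
  | 0 => 0
  | n + 1 => nafWeight ((n + 1) / 2 + (n + 1) % 4 / 3) + (n + 1) % 2
decreasing_by omega

@[simp] lemma nafLength_zero : nafLength 0 = 0 := by rw [nafLength]

@[simp] lemma nafWeight_zero : nafWeight 0 = 0 := by rw [nafWeight]

lemma nafLength_of_pos {n : ℕ} (hn : 0 < n) :
    nafLength n = nafLength (n / 2 + n % 4 / 3) + 1 := by
  obtain ⟨n, rfl⟩ : ∃ k, n = k + 1 := ⟨n - 1, by omega⟩
  rw [nafLength]

lemma nafWeight_of_pos {n : ℕ} (hn : 0 < n) :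
    nafWeight n = nafWeight (n / 2 + n % 4 / 3) + n % 2 := by
  obtain ⟨n, rfl⟩ : ∃ k, n = k + 1 := ⟨n - 1, by omega⟩
  rw [nafWeight]

lemma nafLength_two_mul {m : ℕ} (hm : 0 < m) : nafLength (2 * m) = nafLength m + 1 := by
  rw [nafLength_of_pos (by omega), show 2 * m / 2 + 2 * m % 4 / 3 = m by omega]

lemma nafLength_four_mul_add_one (a : ℕ) : nafLength (4 * a + 1) = nafLength (2 * a) + 1 := by
  rw [nafLength_of_pos (by omega), show (4 * a + 1) / 2 + (4 * a + 1) % 4 / 3 = 2 * a by omega]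

lemma nafLength_four_mul_add_three (a : ℕ) :
    nafLength (4 * a + 3) = nafLength (2 * a + 2) + 1 := by
  rw [nafLength_of_pos (by omega), show (4 * a + 3) / 2 + (4 * a + 3) % 4 / 3 = 2 * a + 2 by omega]

lemma nafWeight_two_mul (m : ℕ) : nafWeight (2 * m) = nafWeight m := by
  rcases Nat.eq_zero_or_pos m with rfl | hm
  · rfl
  rw [nafWeight_of_pos (by omega), show 2 * m / 2 + 2 * m % 4 / 3 = m by omega]
  omega

lemma nafWeight_four_mul_add_one (a : ℕ) : nafWeight (4 * a + 1) = nafWeight (2 * a) + 1 := by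
  rw [nafWeight_of_pos (by omega), show (4 * a + 1) / 2 + (4 * a + 1) % 4 / 3 = 2 * a by omega]
  omega

lemma nafWeight_four_mul_add_three (a : ℕ) :
    nafWeight (4 * a + 3) = nafWeight (2 * a + 2) + 1 := by
  rw [nafWeight_of_pos (by omega), show (4 * a + 3) / 2 + (4 * a + 3) % 4 / 3 = 2 * a + 2 by omega]
  omega

@[elab_as_elim]
theorem naf_induction {P : ℕ → Prop} (zero : P 0)
    (two_mul : ∀ m, 0 < m → P m → P (2 * m))
    (four_mul_add_one : ∀ a, P (2 * a) → P (4 * a + 1))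
    (four_mul_add_three : ∀ a, P (2 * a + 2) → P (4 * a + 3)) (n : ℕ) : P n := by
  induction n using Nat.strong_induction_on with
  | _ n ih =>
    obtain ⟨c, rfl | rfl | rfl | rfl⟩ :
        ∃ c, n = 4 * c ∨ n = 4 * c + 1 ∨ n = 4 * c + 2 ∨ n = 4 * c + 3 := ⟨n / 4, by omega⟩
    · rcases Nat.eq_zero_or_pos c with rfl | hc
      · exact zero
      · rw [show 4 * c = 2 * (2 * c) by ring]
        exact two_mul _ (by omega) (ih _ (by omega))
    · exact four_mul_add_one c (ih _ (by omega))
    · rw [show 4 * c + 2 = 2 * (2 * c + 1) by ring]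
      exact two_mul _ (by omega) (ih _ (by omega))
    · exact four_mul_add_three c (ih _ (by omega))

lemma nafLength_pos {n : ℕ} (hn : 0 < n) : 0 < nafLength n := by
  rw [nafLength_of_pos hn]
  omega

lemma nafLength_one : nafLength 1 = 1 := by
  simpa using nafLength_four_mul_add_one 0

lemma lt_two_pow_nafLength (n : ℕ) : n < 2 ^ nafLength n := by
  induction n using naf_induction with
  | zero => simp
  | two_mul m hm ih => rw [nafLength_two_mul hm, pow_succ]; omega
  | four_mul_add_one a ih => rw [nafLength_four_mul_add_one, pow_succ]; omega
  | four_mul_add_three a ih => rw [nafLength_four_mul_add_three, pow_succ]; omega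

lemma nafWeight_one : nafWeight 1 = 1 := by
  simpa using nafWeight_four_mul_add_one 0

lemma nafWeight_two_pow (p : ℕ) : nafWeight (2 ^ p) = 1 := by
  induction p with
  | zero => exact nafWeight_one
  | succ p ih => rw [pow_succ', nafWeight_two_mul, ih]

lemma nafWeight_two_mul_add_one_bounds (a : ℕ) :
    nafWeight (2 * a) ≤ nafWeight (2 * a + 1) ∧ nafWeight (2 * a + 1) ≤ nafWeight (2 * a) + 1 ∧
      nafWeight (2 * a + 2) ≤ nafWeight (2 * a + 1) ∧
      nafWeight (2 * a + 1) ≤ nafWeight (2 * a + 2) + 1 := by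
  induction a using Nat.strong_induction_on with
  | _ a ih =>
    obtain ⟨c, rfl | rfl⟩ := Nat.even_or_odd' a
    · have h0 : nafWeight (2 * (2 * c)) = nafWeight (2 * c) := nafWeight_two_mul _
      have h1 : nafWeight (2 * (2 * c) + 1) = nafWeight (2 * c) + 1 := by
        rw [show 2 * (2 * c) + 1 = 4 * c + 1 by ring, nafWeight_four_mul_add_one]
      have h2 : nafWeight (2 * (2 * c) + 2) = nafWeight (2 * c + 1) := by
        rw [show 2 * (2 * c) + 2 = 2 * (2 * c + 1) by ring, nafWeight_two_mul]
      rcases Nat.eq_zero_or_pos c with rfl | hc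
      · simp [nafWeight_one] at h0 h1 h2 ⊢
        omega
      · have := ih c (by omega)
        omega
    · have h0 : nafWeight (2 * (2 * c + 1)) = nafWeight (2 * c + 1) := nafWeight_two_mul _
      have h1 : nafWeight (2 * (2 * c + 1) + 1) = nafWeight (2 * c + 2) + 1 := by
        rw [show 2 * (2 * c + 1) + 1 = 4 * c + 3 by ring, nafWeight_four_mul_add_three]
      have h2 : nafWeight (2 * (2 * c + 1) + 2) = nafWeight (2 * c + 2) := by
        rw [show 2 * (2 * c + 1) + 2 = 2 * (2 * c + 2) by ring, nafWeight_two_mul]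
      have := ih c (by omega)
      omega

lemma nafWeight_two_mul_add_one_le (q : ℕ) :
    nafWeight (2 * q + 1) ≤ nafWeight q + 1 ∧ nafWeight (2 * q + 1) ≤ nafWeight (q + 1) + 1 := by
  obtain ⟨c, rfl | rfl⟩ := Nat.even_or_odd' q
  · have h := nafWeight_two_mul_add_one_bounds c
    rw [show 2 * (2 * c) + 1 = 4 * c + 1 by ring, nafWeight_four_mul_add_one]
    omega
  · have h := nafWeight_two_mul_add_one_bounds c
    rw [show 2 * (2 * c + 1) + 1 = 4 * c + 3 by ring, nafWeight_four_mul_add_three,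
      show 2 * c + 1 + 1 = 2 * c + 2 by ring]
    omega

lemma nafWeight_two_pow_add {m p : ℕ} (h : nafLength m ≤ p) :
    nafWeight (2 ^ p + m) = nafWeight m + 1 := by
  induction m using naf_induction generalizing p with
  | zero => simp [nafWeight_two_pow]
  | two_mul m hm ih =>
    rw [nafLength_two_mul hm] at h
    obtain ⟨p, rfl⟩ : ∃ p', p = p' + 1 := ⟨p - 1, by omega⟩
    rw [pow_succ', ← mul_add, nafWeight_two_mul, nafWeight_two_mul, ih (by omega)]
  | four_mul_add_one a ih =>
    rw [nafLength_four_mul_add_one] at h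
    obtain ⟨p, rfl⟩ : ∃ p', p = p' + 1 := ⟨p - 1, by omega⟩
    rcases Nat.eq_zero_or_pos p with rfl | hp
    · obtain rfl : a = 0 := by
        by_contra ha
        have := nafLength_pos (show 0 < 2 * a by omega)
        omega
      rw [show 2 ^ (0 + 1) + (4 * 0 + 1) = 4 * 0 + 3 from rfl, nafWeight_four_mul_add_three,
        show 2 * 0 + 2 = 2 ^ 1 from rfl, nafWeight_two_pow, nafWeight_four_mul_add_one]
      simp
    · obtain ⟨p, rfl⟩ : ∃ p', p = p' + 1 := ⟨p - 1, by omega⟩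
      rw [show 2 ^ (p + 1 + 1) + (4 * a + 1) = 4 * (2 ^ p + a) + 1 by ring,
        nafWeight_four_mul_add_one, nafWeight_four_mul_add_one, mul_add, ← pow_succ',
        ih (by omega)]
  | four_mul_add_three a ih =>
    rw [nafLength_four_mul_add_three] at h
    have := nafLength_pos (show 0 < 2 * a + 2 by omega)
    obtain ⟨p, rfl⟩ : ∃ p', p = p' + 2 := ⟨p - 2, by omega⟩
    rw [show 2 ^ (p + 2) + (4 * a + 3) = 4 * (2 ^ p + a) + 3 by ring,
      nafWeight_four_mul_add_three, nafWeight_four_mul_add_three,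
      show 2 * (2 ^ p + a) + 2 = 2 ^ (p + 1) + (2 * a + 2) by ring, ih (by omega)]

lemma nafWeight_two_pow_nafLength_sub {m : ℕ} (hm : 0 < m) :
    nafWeight (2 ^ nafLength m - m) = nafWeight m := by
  induction m using naf_induction with
  | zero => omega
  | two_mul m hm' ih =>
    have := lt_two_pow_nafLength m
    rw [nafLength_two_mul hm', pow_succ', ← Nat.mul_sub, nafWeight_two_mul, nafWeight_two_mul,
      ih hm']
  | four_mul_add_one a ih =>
    rw [nafLength_four_mul_add_one, nafWeight_four_mul_add_one]
    rcases Nat.eq_zero_or_pos a with rfl | ha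
    · simp [nafWeight_one]
    obtain ⟨L, hL⟩ := Nat.exists_eq_add_one.mpr (nafLength_pos (show 0 < 2 * a by omega))
    have hlt := lt_two_pow_nafLength (2 * a)
    rw [hL, pow_succ] at hlt
    rw [hL] at ih ⊢
    rw [show 2 ^ (L + 1 + 1) - (4 * a + 1) = 4 * (2 ^ L - a - 1) + 3 by
        rw [pow_succ, pow_succ]; omega,
      nafWeight_four_mul_add_three, ← ih (by omega)]
    congr 2
    rw [pow_succ]; omega
  | four_mul_add_three a ih =>
    rw [nafLength_four_mul_add_three, nafWeight_four_mul_add_three]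
    obtain ⟨L, hL⟩ := Nat.exists_eq_add_one.mpr (nafLength_pos (show 0 < 2 * a + 2 by omega))
    have hlt := lt_two_pow_nafLength (2 * a + 2)
    rw [hL, pow_succ] at hlt
    rw [hL] at ih ⊢
    rw [show 2 ^ (L + 1 + 1) - (4 * a + 3) = 4 * (2 ^ L - a - 1) + 1 by
        rw [pow_succ, pow_succ]; omega,
      nafWeight_four_mul_add_one, ← ih (by omega)]
    congr 2
    rw [pow_succ]; omega

lemma three_mul_aseq (i : ℕ) :
    3 * aseq (i + 1) + (i + 1) % 2 = 2 * 2 ^ i + 2 ∧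
      3 * aseq (i + 2) + i % 2 = 4 * 2 ^ i + 2 ∧
      3 * aseq (i + 3) + (i + 1) % 2 = 8 * 2 ^ i + 2 := by
  induction i with
  | zero => simp [aseq]
  | succ i ih =>
    have h : aseq (i + 4) = 2 ^ i * 4 + aseq (i + 2) := by
      rw [show aseq (i + 4) = 2 ^ (i + 2) + aseq (i + 2) from rfl, pow_add]
      norm_num
    simp only [add_assoc, Nat.reduceAdd] at ih ⊢
    rw [h, pow_succ]
    omega

lemma aseq_monotone : Monotone aseq := by
  refine monotone_nat_of_le_succ fun k => ?_
  rcases k with _ | i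
  · exact Nat.zero_le _
  · have := three_mul_aseq i
    simp only [add_assoc, Nat.reduceAdd]
    omega

lemma aseq_add_two {j : ℕ} (hj : 0 < j) : aseq (j + 2) = 2 ^ j + aseq j := by
  obtain ⟨i, rfl⟩ := Nat.exists_eq_add_one.mpr hj
  rfl

lemma aseq_nafLength_le_and_lt {n : ℕ} (hn : 0 < n) :
    aseq (nafLength n) ≤ n ∧ n < aseq (nafLength n + 1) := by
  induction n using naf_induction with
  | zero => omega
  | two_mul m hm ih =>
    obtain ⟨i, hi⟩ := Nat.exists_eq_add_one.mpr (nafLength_pos hm)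
    have := three_mul_aseq i
    rw [nafLength_two_mul hm, hi]
    rw [hi] at ih
    simp only [add_assoc, Nat.reduceAdd] at ih ⊢
    omega
  | four_mul_add_one a ih =>
    rw [nafLength_four_mul_add_one]
    rcases Nat.eq_zero_or_pos a with rfl | ha
    · simp [aseq]
    obtain ⟨i, hi⟩ := Nat.exists_eq_add_one.mpr (nafLength_pos (show 0 < 2 * a by omega))
    have := three_mul_aseq i
    have := ih (by omega)
    rw [hi] at this ⊢
    simp only [add_assoc, Nat.reduceAdd] at this ⊢
    omega
  | four_mul_add_three a ih =>
    rw [nafLength_four_mul_add_three]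
    obtain ⟨i, hi⟩ := Nat.exists_eq_add_one.mpr (nafLength_pos (show 0 < 2 * a + 2 by omega))
    have := three_mul_aseq i
    have := ih (by omega)
    rw [hi] at this ⊢
    simp only [add_assoc, Nat.reduceAdd] at this ⊢
    omega

lemma nafLength_eq_iff {n : ℕ} (hn : 0 < n) (j : ℕ) :
    nafLength n = j ↔ aseq j ≤ n ∧ n < aseq (j + 1) := by
  have h := aseq_nafLength_le_and_lt hn
  refine ⟨fun hj => hj ▸ h, fun ⟨h₁, h₂⟩ => ?_⟩
  by_contra hne
  rcases Nat.lt_or_gt_of_ne hne with hlt | hlt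
  · have := aseq_monotone (show nafLength n + 1 ≤ j by omega)
    omega
  · have := aseq_monotone (show j + 1 ≤ nafLength n by omega)
    omega

/- `(bsdPoly L m).coeff w` counts the strings in `{-1, 0, 1} ^ L` of value `m` with `w` nonzero
digits (`ncard_bsdReps`); the recursion is on the lowest digit. -/
noncomputable def bsdPoly : ℕ → ℤ → ℕ[X]
  | 0, m => if m = 0 then 1 else 0
  | L + 1, m =>
    if m % 2 = 0 then bsdPoly L (m / 2) else X * (bsdPoly L (m / 2) + bsdPoly L (m / 2 + 1))

lemma bsdPoly_zero (m : ℤ) : bsdPoly 0 m = if m = 0 then 1 else 0 := by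
  rw [bsdPoly]

lemma bsdPoly_succ_two_mul (L : ℕ) (t : ℤ) : bsdPoly (L + 1) (2 * t) = bsdPoly L t := by
  rw [bsdPoly, if_pos (by omega), Int.mul_ediv_cancel_left _ two_ne_zero]

lemma bsdPoly_succ_two_mul_add_one (L : ℕ) (t : ℤ) :
    bsdPoly (L + 1) (2 * t + 1) = X * (bsdPoly L t + bsdPoly L (t + 1)) := by
  rw [bsdPoly, if_neg (by omega), show (2 * t + 1) / 2 = t by omega]

lemma bsdPoly_neg (L : ℕ) (m : ℤ) : bsdPoly L (-m) = bsdPoly L m := by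
  induction L generalizing m with
  | zero => simp [bsdPoly_zero]
  | succ L ih =>
    obtain ⟨t, rfl | rfl⟩ := Int.even_or_odd' m
    · rw [← mul_neg, bsdPoly_succ_two_mul, bsdPoly_succ_two_mul, ih]
    · rw [show -(2 * t + 1) = 2 * (-t - 1) + 1 by ring, bsdPoly_succ_two_mul_add_one,
        bsdPoly_succ_two_mul_add_one, show -t - 1 + 1 = -t by ring, show -t - 1 = -(t + 1) by ring,
        ih, ih, add_comm]

lemma bsdPoly_eq_zero_of_two_pow_le {L : ℕ} {m : ℤ} (h : 2 ^ L ≤ m) : bsdPoly L m = 0 := by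
  induction L generalizing m with
  | zero => rw [bsdPoly_zero, if_neg (by omega)]
  | succ L ih =>
    rw [pow_succ] at h
    obtain ⟨t, rfl | rfl⟩ := Int.even_or_odd' m
    · rw [bsdPoly_succ_two_mul, ih (by omega)]
    · rw [bsdPoly_succ_two_mul_add_one, ih (by omega), ih (by omega), add_zero, mul_zero]

lemma bsdPoly_succ (L : ℕ) (m : ℤ) :
    bsdPoly (L + 1) m = bsdPoly L m + X * (bsdPoly L (m - 2 ^ L) + bsdPoly L (m + 2 ^ L)) := by
  induction L generalizing m with
  | zero =>
    obtain ⟨t, rfl | rfl⟩ := Int.even_or_odd' m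
    · rw [bsdPoly_succ_two_mul]
      simp only [bsdPoly_zero]
      split_ifs <;> first | omega | simp
    · rw [bsdPoly_succ_two_mul_add_one]
      simp only [bsdPoly_zero]
      split_ifs <;> first | omega | simp
  | succ L ih =>
    have h2 : (2 : ℤ) ^ (L + 1) = 2 * 2 ^ L := by ring
    obtain ⟨t, rfl | rfl⟩ := Int.even_or_odd' m
    · rw [h2, ← mul_sub, ← mul_add, bsdPoly_succ_two_mul, bsdPoly_succ_two_mul,
        bsdPoly_succ_two_mul, bsdPoly_succ_two_mul, ih]
    · rw [h2, show 2 * t + 1 - 2 * 2 ^ L = 2 * (t - 2 ^ L) + 1 by ring,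
        show 2 * t + 1 + 2 * 2 ^ L = 2 * (t + 2 ^ L) + 1 by ring,
        bsdPoly_succ_two_mul_add_one, bsdPoly_succ_two_mul_add_one, bsdPoly_succ_two_mul_add_one,
        bsdPoly_succ_two_mul_add_one, ih, ih, show t + 1 - 2 ^ L = t - 2 ^ L + 1 by ring,
        show t + 1 + 2 ^ L = t + 2 ^ L + 1 by ring]
      ring

lemma bsdPoly_succ_of_nonneg {L : ℕ} {m : ℤ} (hm : 0 ≤ m) :
    bsdPoly (L + 1) m = bsdPoly L m + X * bsdPoly L (m - 2 ^ L) := by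
  rw [bsdPoly_succ, bsdPoly_eq_zero_of_two_pow_le (m := m + 2 ^ L) (by linarith), add_zero]

lemma bsdPoly_succ_of_two_pow_le {L : ℕ} {m : ℤ} (h : 2 ^ L ≤ m) :
    bsdPoly (L + 1) m = X * bsdPoly L (m - 2 ^ L) := by
  rw [bsdPoly_succ_of_nonneg ((pow_nonneg zero_le_two L).trans h), bsdPoly_eq_zero_of_two_pow_le h,
    zero_add]

lemma nafWeight_natAbs_two_mul_add_one_le (t : ℤ) :
    nafWeight (2 * t + 1).natAbs ≤ nafWeight t.natAbs + 1 ∧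
      nafWeight (2 * t + 1).natAbs ≤ nafWeight (t + 1).natAbs + 1 := by
  rcases le_or_gt 0 t with ht | ht
  · have := nafWeight_two_mul_add_one_le t.natAbs
    rwa [show (2 * t + 1).natAbs = 2 * t.natAbs + 1 by omega,
      show (t + 1).natAbs = t.natAbs + 1 by omega]
  · have := nafWeight_two_mul_add_one_le (t + 1).natAbs
    rwa [show (2 * t + 1).natAbs = 2 * (t + 1).natAbs + 1 by omega,
      show t.natAbs = (t + 1).natAbs + 1 by omega, and_comm]

lemma X_pow_nafWeight_dvd_bsdPoly (L : ℕ) (m : ℤ) : X ^ nafWeight m.natAbs ∣ bsdPoly L m := by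
  induction L generalizing m with
  | zero =>
    rw [bsdPoly_zero]
    split_ifs with hm
    · simp [hm]
    · exact dvd_zero _
  | succ L ih =>
    obtain ⟨t, rfl | rfl⟩ := Int.even_or_odd' m
    · rw [bsdPoly_succ_two_mul, Int.natAbs_mul, show (2 : ℤ).natAbs = 2 from rfl, nafWeight_two_mul]
      exact ih t
    · have key (s : ℤ) (hs : nafWeight (2 * t + 1).natAbs ≤ nafWeight s.natAbs + 1) :
          X ^ nafWeight (2 * t + 1).natAbs ∣ X * bsdPoly L s :=
        (pow_dvd_pow X hs).trans (by rw [pow_succ']; exact mul_dvd_mul_left X (ih s))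
      obtain ⟨h₁, h₂⟩ := nafWeight_natAbs_two_mul_add_one_le t
      rw [bsdPoly_succ_two_mul_add_one, mul_add]
      exact dvd_add (key t h₁) (key (t + 1) h₂)

lemma coeff_bsdPoly_nafLength_nafWeight_ne_zero (n : ℕ) :
    (bsdPoly (nafLength n) n).coeff (nafWeight n) ≠ 0 := by
  induction n using naf_induction with
  | zero => simp [bsdPoly_zero]
  | two_mul m hm ih =>
    rwa [nafLength_two_mul hm, nafWeight_two_mul, Nat.cast_mul, Nat.cast_two, bsdPoly_succ_two_mul]
  | four_mul_add_one a ih =>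
    rw [nafLength_four_mul_add_one, nafWeight_four_mul_add_one,
      show ((4 * a + 1 : ℕ) : ℤ) = 2 * (2 * a : ℕ) + 1 by push_cast; ring,
      bsdPoly_succ_two_mul_add_one, coeff_X_mul, coeff_add]
    exact fun h => ih (Nat.eq_zero_of_add_eq_zero_right h)
  | four_mul_add_three a ih =>
    rw [nafLength_four_mul_add_three, nafWeight_four_mul_add_three,
      show ((4 * a + 3 : ℕ) : ℤ) = 2 * (2 * a + 1 : ℕ) + 1 by push_cast; ring,
      bsdPoly_succ_two_mul_add_one, coeff_X_mul, coeff_add,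
      show ((2 * a + 1 : ℕ) : ℤ) + 1 = (2 * a + 2 : ℕ) by push_cast; ring]
    exact fun h => ih (Nat.eq_zero_of_add_eq_zero_left h)

lemma Set.ncard_eq_sum_ncard_preimage_cons {α : Type*} {L : ℕ} {S : Set (Fin (L + 1) → α)}
    (hS : S.Finite) (D : Finset α) (hD : ∀ b ∈ S, b 0 ∈ D) :
    S.ncard = ∑ d ∈ D, (Fin.cons d ⁻¹' S).ncard := by
  classical
  rw [Set.ncard_eq_toFinset_card _ hS,
    Finset.card_eq_sum_card_fiberwise (f := fun b => b 0) (t := D)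
      (fun b hb => hD b (by simpa using hb))]
  refine Finset.sum_congr rfl fun d _ => ?_
  rw [← Set.ncard_image_of_injective (Fin.cons d ⁻¹' S)
      (Fin.cons_right_injective (α := fun _ => α) d),
    Set.image_preimage_eq_inter_range, ← Set.ncard_coe_finset]
  congr 1
  ext b
  simp only [Finset.coe_filter, Set.Finite.mem_toFinset, Set.mem_inter_iff, Set.mem_range]
  exact and_congr_right fun _ =>
    ⟨fun h => ⟨Fin.tail b, by rw [← h, Fin.cons_self_tail]⟩, fun ⟨_, hy⟩ => hy ▸ Fin.cons_zero _ _⟩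

def bsdReps (L : ℕ) (m : ℤ) (w : ℕ) : Set (Fin L → ℤ) :=
  {b | IsBSDDigits b ∧ bsdVal b = m ∧ {j | b j ≠ 0}.ncard = w}

section DigitStrings

variable {L : ℕ}

lemma isBSDDigits_cons {d : ℤ} {b : Fin L → ℤ} :
    IsBSDDigits (Fin.cons d b : Fin (L + 1) → ℤ) ↔ d ∈ ({-1, 0, 1} : Set ℤ) ∧ IsBSDDigits b := by
  simp [IsBSDDigits, Fin.forall_fin_succ]

lemma bsdVal_cons (d : ℤ) (b : Fin L → ℤ) :
    bsdVal (Fin.cons d b : Fin (L + 1) → ℤ) = d + 2 * bsdVal b := by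
  simp [bsdVal, Fin.sum_univ_succ, pow_succ, Finset.mul_sum, mul_comm, mul_left_comm]

lemma bsdVal_eq_head_add (b : Fin (L + 1) → ℤ) : bsdVal b = b 0 + 2 * bsdVal (Fin.tail b) := by
  rw [← bsdVal_cons, Fin.cons_self_tail]

lemma ncard_cons_ne_zero (d : ℤ) (b : Fin L → ℤ) :
    {j | (Fin.cons d b : Fin (L + 1) → ℤ) j ≠ 0}.ncard =
      (if d = 0 then 0 else 1) + {j | b j ≠ 0}.ncard := by
  classical
  simp only [Set.ncard_eq_toFinset_card', Set.toFinset_ofPred, Finset.card_filter,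
    Fin.sum_univ_succ, Fin.cons_zero, Fin.cons_succ, ite_not]

lemma bsdReps_finite (m : ℤ) (w : ℕ) : (bsdReps L m w).Finite :=
  (Set.Finite.pi fun _ => Set.toFinite ({-1, 0, 1} : Set ℤ)).subset fun _ hb j _ => hb.1 j

lemma mem_preimage_cons_bsdReps {d m : ℤ} {w : ℕ} {b : Fin L → ℤ} :
    b ∈ Fin.cons d ⁻¹' bsdReps (L + 1) m w ↔ d ∈ ({-1, 0, 1} : Set ℤ) ∧ IsBSDDigits b ∧
      d + 2 * bsdVal b = m ∧ (if d = 0 then 0 else 1) + {j | b j ≠ 0}.ncard = w := by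
  simp only [Set.mem_preimage, bsdReps, Set.mem_ofPred_eq, isBSDDigits_cons, bsdVal_cons,
    ncard_cons_ne_zero, and_assoc]

lemma ncard_bsdReps (m : ℤ) (w : ℕ) : (bsdReps L m w).ncard = (bsdPoly L m).coeff w := by
  induction L generalizing m w with
  | zero =>
    simp only [bsdReps, bsdPoly_zero, IsBSDDigits, bsdVal, Set.eq_empty_of_isEmpty,
      Finset.univ_eq_empty, Finset.sum_empty, Set.ncard_empty, IsEmpty.forall_iff, true_and]
    by_cases hm : m = 0 <;> by_cases hw : w = 0 <;>
      simp [hm, hw, eq_comm (a := (0 : ℤ)), eq_comm (a := 0), coeff_one]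
  | succ L ih =>
    have head (b) (hb : b ∈ bsdReps (L + 1) m w) :
        b 0 ∈ ({-1, 0, 1} : Set ℤ) ∧ b 0 + 2 * bsdVal (Fin.tail b) = m :=
      ⟨hb.1 0, (bsdVal_eq_head_add b).symm.trans hb.2.1⟩
    obtain ⟨t, rfl | rfl⟩ := Int.even_or_odd' m
    · rw [Set.ncard_eq_sum_ncard_preimage_cons (bsdReps_finite _ _) {0}
        (fun b hb => by have := head b hb; simp at this ⊢; omega), Finset.sum_singleton,
        bsdPoly_succ_two_mul, ← ih]
      congr 1
      ext b
      rw [mem_preimage_cons_bsdReps]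
      simp [bsdReps]
    · rw [Set.ncard_eq_sum_ncard_preimage_cons (bsdReps_finite _ _) {1, -1}
        (fun b hb => by have := head b hb; simp at this ⊢; omega), Finset.sum_pair (by decide),
        bsdPoly_succ_two_mul_add_one]
      cases w with
      | zero =>
        have empty (d : ℤ) (hd : d ≠ 0) : Fin.cons d ⁻¹' bsdReps (L + 1) (2 * t + 1) 0 = ∅ :=
          Set.eq_empty_of_forall_notMem fun b hb => by
            rw [mem_preimage_cons_bsdReps, if_neg hd] at hb
            omega
        rw [empty 1 one_ne_zero, empty (-1) (by norm_num), coeff_X_mul_zero, Set.ncard_empty,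
          add_zero]
      | succ w =>
        rw [coeff_X_mul, coeff_add, ← ih, ← ih]
        congr 2 <;> ext b <;> rw [mem_preimage_cons_bsdReps] <;> simp [bsdReps] <;> omega

end DigitStrings

section ReducedNAF

variable {k : ℕ}

lemma isReducedNAF_cons_succ {d : ℤ} {b : Fin (k + 1) → ℤ} :
    IsReducedNAF (Fin.cons d b : Fin (k + 2) → ℤ) ↔
      d ∈ ({-1, 0, 1} : Set ℤ) ∧ (d = 0 ∨ b 0 = 0) ∧ IsReducedNAF b := by
  refine ⟨fun ⟨hdig, hadj, hlead⟩ => ?_, fun ⟨hd, hd0, hdig, hadj, hlead⟩ => ?_⟩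
  · rw [isBSDDigits_cons] at hdig
    exact ⟨hdig.1, hadj 0 (by simp), hdig.2, fun j hj => hadj j.succ (by simpa using hj),
      fun _ => hlead (by omega)⟩
  · refine ⟨isBSDDigits_cons.2 ⟨hd, hdig⟩, fun j hj => ?_, fun _ => hlead k.succ_pos⟩
    cases j using Fin.cases with
    | zero => exact hd0
    | succ i => exact hadj i (by simpa using hj)

lemma HasNAFLen.cons {t d : ℤ} (h : HasNAFLen t (k + 1)) (hd : d ∈ ({-1, 0, 1} : Set ℤ))
    (hdt : d = 0 ∨ 2 ∣ t) : HasNAFLen (d + 2 * t) (k + 2) := by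
  obtain ⟨b, hb, rfl⟩ := h
  refine ⟨Fin.cons d b, isReducedNAF_cons_succ.2 ⟨hd, ?_, hb⟩, bsdVal_cons d b⟩
  have h0 := hb.1 0
  have := bsdVal_eq_head_add b
  simp only [Set.mem_insert_iff, Set.mem_singleton_iff] at h0
  omega

lemma hasNAFLen_nafLength (n : ℕ) : HasNAFLen n (nafLength n) := by
  induction n using naf_induction with
  | zero =>
    rw [nafLength_zero]
    exact ⟨fun _ => 0, ⟨fun j => j.elim0, fun j => j.elim0, fun h => absurd h (lt_irrefl 0)⟩,
      by simp [bsdVal]⟩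
  | two_mul m hm ih =>
    obtain ⟨i, hi⟩ := Nat.exists_eq_add_one.mpr (nafLength_pos hm)
    rw [hi] at ih
    rw [nafLength_two_mul hm, hi, Nat.cast_mul, Nat.cast_two, ← zero_add (2 * (m : ℤ))]
    exact ih.cons (by simp) (Or.inl rfl)
  | four_mul_add_one a ih =>
    rw [nafLength_four_mul_add_one]
    rcases Nat.eq_zero_or_pos a with rfl | ha
    · rw [mul_zero, nafLength_zero]
      exact ⟨fun _ => 1, ⟨fun _ => by simp, fun j h => by omega, fun _ => one_ne_zero⟩,
        by simp [bsdVal]⟩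
    obtain ⟨i, hi⟩ := Nat.exists_eq_add_one.mpr (nafLength_pos (show 0 < 2 * a by omega))
    rw [hi] at ih ⊢
    rw [show ((4 * a + 1 : ℕ) : ℤ) = 1 + 2 * (2 * a : ℕ) by push_cast; ring]
    exact ih.cons (by simp) (Or.inr (by push_cast; exact dvd_mul_right 2 _))
  | four_mul_add_three a ih =>
    rw [nafLength_four_mul_add_three]
    obtain ⟨i, hi⟩ := Nat.exists_eq_add_one.mpr (nafLength_pos (show 0 < 2 * a + 2 by omega))
    rw [hi] at ih ⊢
    rw [show ((4 * a + 3 : ℕ) : ℤ) = -1 + 2 * (2 * a + 2 : ℕ) by push_cast; ring]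
    exact ih.cons (by simp) (Or.inr (by push_cast; omega))

theorem IsReducedNAF.eq_nafLength :
    ∀ {k : ℕ} {b : Fin k → ℤ} {n : ℕ}, IsReducedNAF b → bsdVal b = n → k = nafLength n
  | 0, b, n, _, hv => by
    have : (n : ℤ) = 0 := by simpa [bsdVal] using hv.symm
    rw [show n = 0 by omega, nafLength_zero]
  | 1, b, n, hb, hv => by
    have h0 := hb.1 0
    have hl : b 0 ≠ 0 := hb.2.2 one_pos
    have : bsdVal b = b 0 := by simp [bsdVal]
    simp only [Set.mem_insert_iff, Set.mem_singleton_iff] at h0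
    rw [show n = 1 by omega, nafLength_one]
  | k + 2, b, n, hb, hv => by
    rw [← Fin.cons_self_tail b, isReducedNAF_cons_succ] at hb
    obtain ⟨hd, hd0, htail⟩ := hb
    simp only [Set.mem_insert_iff, Set.mem_singleton_iff] at hd
    have hval := bsdVal_eq_head_add b
    have hpar : Fin.tail b 0 = 0 → 2 ∣ bsdVal (Fin.tail b) := fun h => by
      rw [bsdVal_eq_head_add (Fin.tail b), h]; omega
    obtain ⟨t, ht⟩ : ∃ t : ℕ, bsdVal (Fin.tail b) = t := ⟨(bsdVal (Fin.tail b)).toNat, by omega⟩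
    have ih := htail.eq_nafLength ht
    rw [ht] at hval hpar
    rcases hd with h | h | h
    · obtain ⟨a, rfl⟩ : ∃ a, t = 2 * a + 2 := ⟨t / 2 - 1, by omega⟩
      rw [show n = 4 * a + 3 by omega, nafLength_four_mul_add_three, ← ih]
    · have ht0 : 0 < t := by
        by_contra ht0
        rw [show t = 0 by omega, nafLength_zero] at ih
        omega
      rw [show n = 2 * t by omega, nafLength_two_mul ht0, ← ih]
    · obtain ⟨a, rfl⟩ : ∃ a, t = 2 * a := ⟨t / 2, by omega⟩
      rw [show n = 4 * a + 1 by omega, nafLength_four_mul_add_one, ← ih]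

lemma hasNAFLen_iff (n k : ℕ) : HasNAFLen n k ↔ k = nafLength n :=
  ⟨fun ⟨_, hb, hv⟩ => hb.eq_nafLength hv, fun h => h ▸ hasNAFLen_nafLength n⟩

lemma nafLen_eq_nafLength (n : ℕ) : nafLen n = nafLength n := by
  simp only [nafLen, hasNAFLen_iff, Set.ofPred_eq_eq_singleton, csInf_singleton]

lemma NAFInterval_eq_Ico {j : ℕ} (hj : 0 < j) :
    NAFInterval j = Set.Ico (aseq j) (aseq (j + 1)) := by
  ext n
  rw [NAFInterval, Set.mem_ofPred_eq, hasNAFLen_iff, Set.mem_Ico, eq_comm]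
  rcases Nat.eq_zero_or_pos n with rfl | hn
  · obtain ⟨i, rfl⟩ := Nat.exists_eq_add_one.mpr hj
    have := three_mul_aseq i
    simp only [nafLength_zero]
    omega
  · exact nafLength_eq_iff hn j

lemma ncard_NAFInterval {j : ℕ} (hj : 0 < j) : (NAFInterval j).ncard = aseq (j + 1) - aseq j := by
  rw [NAFInterval_eq_Ico hj, ← Finset.coe_Ico, Set.ncard_coe_finset, Nat.card_Ico]

end ReducedNAF

lemma exists_rep_iff_coeff_ne_zero (n w : ℕ) :
    (∃ b : Fin (nafLen n) → ℤ, IsBSDDigits b ∧ bsdVal b = n ∧ {j | b j ≠ 0}.ncard = w) ↔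
      (bsdPoly (nafLength n) n).coeff w ≠ 0 := by
  rw [← ncard_bsdReps, ← nafLen_eq_nafLength, ← Nat.pos_iff_ne_zero,
    Set.ncard_pos (bsdReps_finite _ _)]
  rfl

lemma minWeight_eq_nafWeight (n : ℕ) : minWeight n = nafWeight n := by
  refine IsLeast.csInf_eq ⟨(exists_rep_iff_coeff_ne_zero n _).2
    (coeff_bsdPoly_nafLength_nafWeight_ne_zero n), fun w hw => ?_⟩
  by_contra! hlt
  refine (exists_rep_iff_coeff_ne_zero n w).1 hw ?_
  exact X_pow_dvd_iff.1 (X_pow_nafWeight_dvd_bsdPoly _ _) w (by simpa using hlt)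

lemma Mfun_eq_coeff (n : ℕ) : Mfun n = (bsdPoly (nafLength n) n).coeff (nafWeight n) := by
  rw [← ncard_bsdReps, ← minWeight_eq_nafWeight, ← nafLen_eq_nafLength]
  rfl

section Recursion

variable {n : ℕ}

lemma nafLength_two_pow_nafLength_sub (hn : 0 < n) :
    nafLength (2 ^ nafLength n - n) = nafLength n := by
  have hlt := lt_two_pow_nafLength n
  obtain ⟨i, hi⟩ := Nat.exists_eq_add_one.mpr (nafLength_pos hn)
  have hb := aseq_nafLength_le_and_lt hn
  have h₁ := three_mul_aseq i
  rw [nafLength_eq_iff (by omega), hi]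
  rw [hi] at hb hlt
  simp only [add_assoc, Nat.reduceAdd, pow_succ] at hb h₁ hlt ⊢
  omega

lemma nafLength_two_pow_nafLength_add (hn : 0 < n) :
    nafLength (2 ^ nafLength n + n) = nafLength n + 2 := by
  obtain ⟨i, hi⟩ := Nat.exists_eq_add_one.mpr (nafLength_pos hn)
  have hb := aseq_nafLength_le_and_lt hn
  have h₁ := three_mul_aseq i
  have h₂ := three_mul_aseq (i + 1)
  rw [nafLength_eq_iff (by positivity), hi]
  rw [hi] at hb
  simp only [add_assoc, Nat.reduceAdd, pow_succ] at hb h₁ h₂ ⊢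
  omega

lemma nafLength_two_pow_succ_nafLength_add (hn : 0 < n) :
    nafLength (2 ^ (nafLength n + 1) + n) = nafLength n + 2 := by
  obtain ⟨i, hi⟩ := Nat.exists_eq_add_one.mpr (nafLength_pos hn)
  have hb := aseq_nafLength_le_and_lt hn
  have h₁ := three_mul_aseq i
  have h₂ := three_mul_aseq (i + 1)
  rw [nafLength_eq_iff (by positivity), hi]
  rw [hi] at hb
  simp only [add_assoc, Nat.reduceAdd, pow_succ] at hb h₁ h₂ ⊢
  omega

lemma coeff_bsdPoly_succ_nafLength (hn : 0 < n) :
    (bsdPoly (nafLength n + 1) n).coeff (nafWeight n) = Mfun n := by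
  have hlt := lt_two_pow_nafLength n
  have hsub : (n : ℤ) - 2 ^ nafLength n = -((2 ^ nafLength n - n : ℕ) : ℤ) := by
    push_cast [Nat.cast_sub hlt.le]
    ring
  have hdvd : X ^ (nafWeight n + 1) ∣ X * bsdPoly (nafLength n) (n - 2 ^ nafLength n) := by
    rw [pow_succ', hsub, bsdPoly_neg]
    refine mul_dvd_mul_left X ?_
    simpa [nafWeight_two_pow_nafLength_sub hn] using
      X_pow_nafWeight_dvd_bsdPoly (nafLength n) ((2 ^ nafLength n - n : ℕ) : ℤ)
  rw [Mfun_eq_coeff, bsdPoly_succ_of_nonneg (Nat.cast_nonneg n), coeff_add,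
    X_pow_dvd_iff.1 hdvd _ (Nat.lt_succ_self _), add_zero]

lemma Mfun_two_pow_succ_nafLength_add (hn : 0 < n) :
    Mfun (2 ^ (nafLength n + 1) + n) = Mfun n := by
  rw [Mfun_eq_coeff, nafLength_two_pow_succ_nafLength_add hn, nafWeight_two_pow_add (by omega),
    Nat.cast_add, Nat.cast_pow, Nat.cast_two,
    bsdPoly_succ_of_two_pow_le (by linarith [(Nat.cast_nonneg n : (0 : ℤ) ≤ n)]),
    add_sub_cancel_left, coeff_X_mul, coeff_bsdPoly_succ_nafLength hn]

lemma Mfun_two_pow_nafLength_add (hn : 0 < n) :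
    Mfun (2 ^ nafLength n + n) = Mfun (2 ^ nafLength n - n) + Mfun n := by
  have hlt := lt_two_pow_nafLength n
  set n' := 2 ^ nafLength n - n with hn'
  have hn'0 : 0 < n' := by omega
  have hsplit : bsdPoly (nafLength n + 2) ((2 ^ nafLength n + n : ℕ) : ℤ) =
      X * bsdPoly (nafLength n) n + X * bsdPoly (nafLength n + 1) n' := by
    have e₁ : ((2 ^ nafLength n + n : ℕ) : ℤ) - 2 ^ nafLength n = n := by push_cast; ring
    have e₂ : ((2 ^ nafLength n + n : ℕ) : ℤ) - 2 ^ (nafLength n + 1) = -(n' : ℤ) := by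
      rw [hn', Nat.cast_sub hlt.le]
      push_cast
      ring
    rw [bsdPoly_succ_of_nonneg (Nat.cast_nonneg _), e₂, bsdPoly_neg,
      bsdPoly_succ_of_two_pow_le (by push_cast; linarith [(Nat.cast_nonneg n : (0 : ℤ) ≤ n)]), e₁]
  rw [Mfun_eq_coeff, nafLength_two_pow_nafLength_add hn, nafWeight_two_pow_add le_rfl, hsplit,
    coeff_add, coeff_X_mul, coeff_X_mul, ← Mfun_eq_coeff, add_comm]
  congr 1
  rw [← nafWeight_two_pow_nafLength_sub hn, ← coeff_bsdPoly_succ_nafLength hn'0,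
    nafLength_two_pow_nafLength_sub hn]

end Recursion

theorem num_opt_recursion_AC (k v : ℕ) (hk : 3 ≤ k)
    (hv : v < (NAFInterval (k - 2)).ncard) :
    Mfun (aseq k + v)
      = Mfun (2 ^ (k - 2) - (aseq (k - 2) + v)) + Mfun (aseq (k - 2) + v) ∧
    Mfun (2 ^ (k - 1) + aseq (k - 2) + v) = Mfun (aseq (k - 2) + v) := by
  obtain ⟨j, rfl⟩ : ∃ j, k = j + 2 := ⟨k - 2, by omega⟩
  have hj : 0 < j := by omega
  rw [Nat.add_sub_cancel, ncard_NAFInterval hj] at hv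
  rw [Nat.add_sub_cancel, show j + 2 - 1 = j + 1 by omega, aseq_add_two hj, add_assoc, add_assoc]
  have hn : 0 < aseq j + v := by
    obtain ⟨i, rfl⟩ := Nat.exists_eq_add_one.mpr hj
    have := three_mul_aseq i
    omega
  have hlen : nafLength (aseq j + v) = j := (nafLength_eq_iff hn j).2 ⟨by omega, by omega⟩
  have hA := Mfun_two_pow_nafLength_add hn
  have hC := Mfun_two_pow_succ_nafLength_add hn
  rw [hlen] at hA hC
  exact ⟨hA, hC⟩
end
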